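/- Let d ≥ 2 be an integer, q = -d, n ≥ 1, and 0 ≤ m₁, m₂ ≤ n-1. Then ⟨σ^{q^{m₁}+q^{m₂}}⟩_n = 0, ⟨σ^{q^{m₁}}·u₁(σ^{q^{m₂}})⟩_n = 0, and ⟨u₁(σ^{q^{m₁}})·u₁(σ^{q^{m₂}})⟩_n = 0. -/

import Mathlib

/-- The average `⟨G⟩_n = (1/N)·∑_{j=1}^N G(σ_j)` with `N = |q^n - 1|` and
`σ_j = exp(2πi·j/(q^n-1))`. -/
noncomputable def avg (q : ℤ) (n : ℕ) (G : ℂ → ℂ) : ℂ :=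
  (1 / ((q ^ n - 1).natAbs : ℂ)) *
    ∑ j ∈ Finset.Icc 1 (q ^ n - 1).natAbs,
      G (Complex.exp (2 * Real.pi * Complex.I * (j : ℂ) / ((q : ℂ) ^ n - 1)))

/-- `u₁(z) = ∑_{k=0}^∞ z^{q^k}/q^k`. -/
noncomputable def u1 (q : ℤ) (z : ℂ) : ℂ := ∑' k : ℕ, z ^ (q ^ k) / (q : ℂ) ^ k

/-!
The nodes `σ_j` run over the `|q ^ n - 1|`-th roots of unity, so `⟨σ ^ e⟩_n` vanishes unless
`q ^ n - 1 ∣ e`. Expanding `u₁` as an absolutely convergent series turns each of the three averages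
into a convergent sum of averages `⟨σ ^ (q ^ a + q ^ b)⟩_n`, and `q ^ n - 1` never divides
`q ^ a + q ^ b`: as `q ^ n ≡ 1`, this would force `q ^ n - 1 ∣ 1 + q ^ r` with `r < n`, but
`1 + q ^ r ≠ 0` is strictly smaller than `q ^ n - 1` in absolute value. The last step needs `q`
negative: for `q = 2`, `2 ^ 2 - 1 ∣ 1 + 2`.
-/

open Finset Complex

section Divisibility

theorem pow_modEq_pow_mod (q : ℤ) (n a : ℕ) : q ^ a ≡ q ^ (a % n) [ZMOD q ^ n - 1] := by
  have hqn : q ^ n ≡ 1 [ZMOD q ^ n - 1] := Int.modEq_iff_dvd.mpr ⟨-1, by ring⟩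
  calc q ^ a = q ^ (a % n) * (q ^ n) ^ (a / n) := by rw [← pow_mul, ← pow_add, Nat.mod_add_div]
    _ ≡ q ^ (a % n) * 1 ^ (a / n) [ZMOD q ^ n - 1] := (hqn.pow _).mul_left _
    _ = q ^ (a % n) := by rw [one_pow, mul_one]

theorem isCoprime_pow_sub_one (q : ℤ) {n : ℕ} (hn : n ≠ 0) : IsCoprime q (q ^ n - 1) :=
  ⟨q ^ (n - 1), -1, by rw [← pow_succ, Nat.sub_add_cancel (Nat.one_le_iff_ne_zero.mpr hn)]; ring⟩

variable {q : ℤ}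

theorem pow_le_neg_two_or_four_le (hq : q ≤ -2) {s : ℕ} (hs : s ≠ 0) :
    q ^ s ≤ -2 ∨ 4 ≤ q ^ s := by
  induction s with
  | zero => exact absurd rfl hs
  | succ s ih =>
    rcases Nat.eq_zero_or_pos s with rfl | hs'
    · exact Or.inl (by simpa using hq)
    · rw [pow_succ]
      rcases ih hs'.ne' with h | h
      · right; nlinarith
      · left; nlinarith

theorem abs_one_add_lt_abs_mul_sub_one {x y : ℤ} (hx : x ≠ 0) (hy : y ≤ -2 ∨ 4 ≤ y) :
    |1 + x| < |x * y - 1| := by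
  rcases lt_or_gt_of_ne hx with hx | hx <;> rcases hy with hy | hy <;>
    rw [abs_lt] <;> constructor <;> cases abs_cases (x * y - 1) <;> nlinarith

theorem pow_ne_neg_one (hq : q ≤ -2) (r : ℕ) : q ^ r ≠ -1 := by
  rcases Nat.eq_zero_or_pos r with rfl | hr
  · simp
  · rcases pow_le_neg_two_or_four_le hq hr.ne' with h | h <;> omega

theorem not_dvd_one_add_pow (hq : q ≤ -2) {r n : ℕ} (hr : r < n) : ¬ q ^ n - 1 ∣ 1 + q ^ r := by
  intro h
  have hlt : |1 + q ^ r| < |q ^ n - 1| := by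
    have hn : q ^ n = q ^ r * q ^ (n - r) := by rw [← pow_add, Nat.add_sub_cancel' hr.le]
    rw [hn]
    exact abs_one_add_lt_abs_mul_sub_one (pow_ne_zero _ (by omega))
      (pow_le_neg_two_or_four_le hq (by omega))
  have hzero : 1 + q ^ r = 0 := Int.eq_zero_of_abs_lt_dvd ((abs_dvd _ _).mpr h) hlt
  exact pow_ne_neg_one hq r (by omega)

theorem not_dvd_pow_add_pow (hq : q ≤ -2) {n : ℕ} (hn : n ≠ 0) (a b : ℕ) :
    ¬ q ^ n - 1 ∣ q ^ a + q ^ b := by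
  wlog hab : a ≤ b generalizing a b
  · rw [add_comm]; exact this b a (by omega)
  intro h
  have hfac : q ^ a + q ^ b = q ^ a * (1 + q ^ (b - a)) := by
    rw [mul_add, mul_one, ← pow_add, Nat.add_sub_cancel' hab]
  rw [hfac] at h
  have h1 : q ^ n - 1 ∣ 1 + q ^ (b - a) :=
    ((isCoprime_pow_sub_one q hn).pow_left.symm).dvd_of_dvd_mul_left h
  have h2 : q ^ n - 1 ∣ 1 + q ^ ((b - a) % n) :=
    (((pow_modEq_pow_mod q n (b - a)).add_left 1).dvd_iff).mp h1
  exact not_dvd_one_add_pow hq (Nat.mod_lt _ (Nat.pos_of_ne_zero hn)) h2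

end Divisibility

section RootsOfUnity

theorem isPrimitiveRoot_exp_div_int {c : ℤ} (hc : c ≠ 0) :
    IsPrimitiveRoot (exp (2 * Real.pi * I / c)) c.natAbs := by
  obtain ⟨N, rfl | rfl⟩ := Int.eq_nat_or_neg c
  · have hN : N ≠ 0 := by exact_mod_cast hc
    simpa using isPrimitiveRoot_exp N hN
  · have hN : N ≠ 0 := by simpa using hc
    simpa [← exp_neg, neg_div, div_neg] using (isPrimitiveRoot_exp N hN).inv

theorem sum_geom_Icc_eq_zero {K : Type*} [DivisionRing K] {ζ : K} {N : ℕ}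
    (hN : ζ ^ N = 1) (hζ : ζ ≠ 1) : ∑ j ∈ Icc 1 N, ζ ^ j = 0 := by
  rw [← Ico_add_one_right_eq_Icc, geom_sum_Ico hζ (by omega), pow_succ, hN, pow_one, one_mul,
    sub_self, zero_div]

theorem sum_exp_zpow_eq_zero {c e : ℤ} (he : ¬ c ∣ e) :
    ∑ j ∈ Icc 1 c.natAbs, exp (2 * Real.pi * I * j / c) ^ e = 0 := by
  rcases eq_or_ne c 0 with rfl | hc
  · simp
  have hω := isPrimitiveRoot_exp_div_int hc
  have hpow : ∀ j : ℕ,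
      exp (2 * Real.pi * I * j / c) ^ e = (exp (2 * Real.pi * I / c) ^ e) ^ j := by
    intro j
    rw [mul_div_right_comm, mul_comm, exp_nat_mul, ← zpow_natCast, ← zpow_natCast, ← zpow_mul,
      ← zpow_mul, mul_comm (j : ℤ)]
  rw [sum_congr rfl fun j _ => hpow j]
  refine sum_geom_Icc_eq_zero ?_ ?_
  · rw [← zpow_natCast, ← zpow_mul, mul_comm e, zpow_mul, zpow_natCast, hω.pow_eq_one, one_zpow]
  · rwa [Ne, hω.zpow_eq_one_iff_dvd, Int.natAbs_dvd]

end RootsOfUnity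

section Average

variable {q : ℤ} {n : ℕ}

theorem norm_exp_two_pi_I_mul_div_int (x : ℝ) (c : ℤ) : ‖exp (2 * Real.pi * I * x / c)‖ = 1 := by
  rw [show 2 * Real.pi * I * x / c = ((2 * Real.pi * x / c : ℝ) : ℂ) * I by push_cast; ring]
  exact norm_exp_ofReal_mul_I _

theorem norm_avg_node (q : ℤ) (n j : ℕ) :
    ‖exp (2 * Real.pi * I * j / ((q : ℂ) ^ n - 1))‖ = 1 := by
  simpa using norm_exp_two_pi_I_mul_div_int j (q ^ n - 1)

theorem avg_congr {G H : ℂ → ℂ} (h : ∀ σ : ℂ, ‖σ‖ = 1 → G σ = H σ) : avg q n G = avg q n H := by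
  unfold avg
  congr 1
  exact sum_congr rfl fun j _ => h _ (norm_avg_node q n j)

theorem avg_div_const (G : ℂ → ℂ) (c : ℂ) : avg q n (fun σ => G σ / c) = avg q n G / c := by
  simp only [avg, ← sum_div, mul_div_assoc]

theorem avg_tsum {ι : Type*} (F : ι → ℂ → ℂ) (hF : ∀ σ : ℂ, ‖σ‖ = 1 → Summable fun i => F i σ) :
    avg q n (fun σ => ∑' i, F i σ) = ∑' i, avg q n (F i) := by
  simp only [avg, tsum_mul_left]
  rw [Summable.tsum_finsetSum fun j _ => hF _ (norm_avg_node q n j)]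

theorem avg_zpow_eq_zero {e : ℤ} (he : ¬ q ^ n - 1 ∣ e) : avg q n (fun σ => σ ^ e) = 0 := by
  have hc : (q : ℂ) ^ n - 1 = ((q ^ n - 1 : ℤ) : ℂ) := by push_cast; rfl
  simp only [avg, hc, sum_exp_zpow_eq_zero he, mul_zero]

theorem summable_norm_zpow_div {ι : Type*} {σ : ℂ} (hσ : ‖σ‖ = 1) (e : ι → ℤ) {c : ι → ℂ}
    (hc : Summable fun i => ‖c i‖⁻¹) : Summable fun i => ‖σ ^ e i / c i‖ := by
  simpa [norm_div, norm_zpow, hσ] using hc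

theorem avg_tsum_zpow_div_eq_zero {ι : Type*} {e : ι → ℤ} {c : ι → ℂ}
    (hc : Summable fun i => ‖c i‖⁻¹) (he : ∀ i, ¬ q ^ n - 1 ∣ e i) :
    avg q n (fun σ => ∑' i, σ ^ e i / c i) = 0 := by
  rw [avg_tsum _ fun σ hσ => (summable_norm_zpow_div hσ e hc).of_norm]
  refine (tsum_congr fun i => ?_).trans tsum_zero
  rw [avg_div_const (· ^ e i), avg_zpow_eq_zero (he i), zero_div]

end Average

section Series

variable {q : ℤ}

theorem summable_inv_norm_intCast_pow (hq : 1 < |q|) : Summable fun k : ℕ => ‖(q : ℂ) ^ k‖⁻¹ := by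
  have hq' : 1 < ‖(q : ℂ)‖ := by rwa [norm_intCast, ← Int.cast_abs, ← Int.cast_one, Int.cast_lt]
  simpa [norm_pow, inv_pow] using
    summable_geometric_of_lt_one (by positivity) (inv_lt_one_of_one_lt₀ hq')

theorem summable_inv_norm_pow_add {z : ℂ} (h : Summable fun k : ℕ => ‖z ^ k‖⁻¹) :
    Summable fun p : ℕ × ℕ => ‖z ^ (p.1 + p.2)‖⁻¹ := by
  refine (h.mul_of_nonneg h (fun _ => by positivity) fun _ => by positivity).congr fun p => ?_
  rw [pow_add, norm_mul, mul_inv]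

theorem u1_zpow_pow (q : ℤ) (σ : ℂ) (m : ℕ) :
    u1 q (σ ^ q ^ m) = ∑' k : ℕ, σ ^ q ^ (m + k) / (q : ℂ) ^ k := by
  simp only [u1, ← zpow_mul, pow_add]

theorem zpow_pow_mul_u1_zpow_pow {σ : ℂ} (hσ : σ ≠ 0) (m₁ m₂ : ℕ) :
    σ ^ q ^ m₁ * u1 q (σ ^ q ^ m₂) = ∑' k : ℕ, σ ^ (q ^ m₁ + q ^ (m₂ + k)) / (q : ℂ) ^ k := by
  simp only [u1_zpow_pow, ← tsum_mul_left, zpow_add₀ hσ, mul_div_assoc]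

theorem u1_zpow_pow_mul_u1_zpow_pow {σ : ℂ} (hσ : ‖σ‖ = 1)
    (hq : Summable fun k : ℕ => ‖(q : ℂ) ^ k‖⁻¹) (m₁ m₂ : ℕ) :
    u1 q (σ ^ q ^ m₁) * u1 q (σ ^ q ^ m₂) =
      ∑' p : ℕ × ℕ, σ ^ (q ^ (m₁ + p.1) + q ^ (m₂ + p.2)) / (q : ℂ) ^ (p.1 + p.2) := by
  have hσ₀ : σ ≠ 0 := norm_ne_zero_iff.mp (by simp [hσ])
  rw [u1_zpow_pow, u1_zpow_pow, tsum_mul_tsum_of_summable_norm (summable_norm_zpow_div hσ _ hq)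
    (summable_norm_zpow_div hσ _ hq)]
  simp only [div_mul_div_comm, zpow_add₀ hσ₀, pow_add]

end Series

theorem avg_mixed_eq_zero_general (d q : ℤ) (hd : 2 ≤ d) (hq : q = -d)
    (n : ℕ) (hn : 1 ≤ n) (m₁ m₂ : ℕ) :
    avg q n (fun σ => σ ^ (q ^ m₁ + q ^ m₂)) = 0 ∧
    avg q n (fun σ => σ ^ (q ^ m₁) * u1 q (σ ^ (q ^ m₂))) = 0 ∧
    avg q n (fun σ => u1 q (σ ^ (q ^ m₁)) * u1 q (σ ^ (q ^ m₂))) = 0 := by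
  have hq₂ : q ≤ -2 := by omega
  have hndvd : ∀ a b : ℕ, ¬ q ^ n - 1 ∣ q ^ a + q ^ b := not_dvd_pow_add_pow hq₂ (by omega)
  have hsum := summable_inv_norm_intCast_pow (lt_abs.mpr (Or.inr (by omega : 1 < -q)))
  refine ⟨avg_zpow_eq_zero (hndvd _ _), ?_, ?_⟩
  · rw [avg_congr fun σ hσ => zpow_pow_mul_u1_zpow_pow (norm_ne_zero_iff.mp (by simp [hσ])) m₁ m₂]
    exact avg_tsum_zpow_div_eq_zero hsum fun k => hndvd _ _
  · rw [avg_congr fun σ hσ => u1_zpow_pow_mul_u1_zpow_pow hσ hsum m₁ m₂]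
    exact avg_tsum_zpow_div_eq_zero (summable_inv_norm_pow_add hsum) fun p => hndvd _ _

/-- for `d ≥ 2`, `q = -d`, `n ≥ 1` and `0 ≤ m₁, m₂ ≤ n-1`, one has
`⟨σ^{q^{m₁}+q^{m₂}}⟩_n = 0`, `⟨σ^{q^{m₁}}·u₁(σ^{q^{m₂}})⟩_n = 0` and
`⟨u₁(σ^{q^{m₁}})·u₁(σ^{q^{m₂}})⟩_n = 0`. -/
theorem avg_mixed_eq_zero (d q : ℤ) (hd : 2 ≤ d) (hq : q = -d)
    (n : ℕ) (hn : 1 ≤ n) (m₁ m₂ : ℕ) (hm₁ : m₁ ≤ n - 1) (hm₂ : m₂ ≤ n - 1) :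
    avg q n (fun σ => σ ^ (q ^ m₁ + q ^ m₂)) = 0 ∧
    avg q n (fun σ => σ ^ (q ^ m₁) * u1 q (σ ^ (q ^ m₂))) = 0 ∧
    avg q n (fun σ => u1 q (σ ^ (q ^ m₁)) * u1 q (σ ^ (q ^ m₂))) = 0 :=
  avg_mixed_eq_zero_general d q hd hq n hn m₁ m₂
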